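/- Let μ be a rational-infinitely divisible probability measure on ℝ with characteristic function f(t) = ∫ exp(itx) dμ(x) (so that f(t) ≠ 0 for all t ∈ ℝ). Then for every τ > 0 there exists a finite constant M such that for all t ∈ ℝ: (1/(2τ)) ∫_{−τ}^{τ} |f(t−h)·f(t+h)| / |f(t)|² dh ≤ M. -/

import Mathlib

open MeasureTheory Complex

/-- The characteristic function of a measure `μ` on `ℝ`:
`f(t) = ∫ exp(itx) dμ(x)`. -/
noncomputable def charFn (μ : Measure ℝ) (t : ℝ) : ℂ :=
  ∫ x : ℝ, Complex.exp (t * x * Complex.I) ∂μ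

/-- `n`-fold (additive) convolution power of a measure on `ℝ`. -/
noncomputable def convPow (ρ : Measure ℝ) : ℕ → Measure ℝ
  | 0 => Measure.dirac 0
  | n + 1 => Measure.conv (convPow ρ n) ρ

/-- A probability measure `ν` on `ℝ` is infinitely divisible if for every `n ≥ 1`
there is a probability measure `ρ` with `ν = ρ^{*n}`. -/
def IsInfinitelyDivisible (ν : Measure ℝ) : Prop :=
  IsProbabilityMeasure ν ∧
    ∀ n : ℕ, 0 < n → ∃ ρ : Measure ℝ, IsProbabilityMeasure ρ ∧ ν = convPow ρ n

/-- A probability measure `μ` on `ℝ` is rational-infinitely divisible if there are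
infinitely divisible probability measures `μ₁, μ₂` with `μ₁ = μ ∗ μ₂`. -/
def IsRationalInfinitelyDivisible (μ : Measure ℝ) : Prop :=
  ∃ μ₁ μ₂ : Measure ℝ, IsInfinitelyDivisible μ₁ ∧ IsInfinitelyDivisible μ₂ ∧
    μ₁ = Measure.conv μ μ₂

open Filter Topology

lemma abs_exp_one (t x : ℝ) : ‖Complex.exp (t * x * Complex.I)‖ = 1 := by
  have : (t : ℂ) * x * Complex.I = ((t * x : ℝ) : ℂ) * Complex.I := by push_cast; ring
  rw [this, Complex.norm_exp_ofReal_mul_I]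

lemma integrable_exp (μ : Measure ℝ) [IsFiniteMeasure μ] (t : ℝ) :
    Integrable (fun x : ℝ => Complex.exp (t * x * Complex.I)) μ := by
  refine (integrable_const (1 : ℝ)).mono' ?_ ?_
  · exact (Continuous.aestronglyMeasurable (by continuity))
  · filter_upwards with x
    simp [abs_exp_one]



lemma charFn_zero (μ : Measure ℝ) [IsProbabilityMeasure μ] : charFn μ 0 = 1 := by
  simp [charFn]

lemma abs_charFn_le (μ : Measure ℝ) [IsProbabilityMeasure μ] (t : ℝ) :
    ‖charFn μ t‖ ≤ 1 := by
  have := norm_integral_le_of_norm_le_const (μ := μ) (C := 1)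
    (f := fun x : ℝ => Complex.exp (t * x * Complex.I)) ?_
  · simpa [charFn] using this
  · filter_upwards with x; simp [abs_exp_one]

lemma continuous_charFn (μ : Measure ℝ) [IsFiniteMeasure μ] : Continuous (charFn μ) := by
  apply continuous_of_dominated (bound := fun _ : ℝ => (1:ℝ))
  · exact fun t => (Continuous.aestronglyMeasurable (by continuity))
  · intro t; filter_upwards with x; simp [abs_exp_one]
  · exact integrable_const 1
  · filter_upwards with x; continuity



lemma charFn_conv (ν₁ ν₂ : Measure ℝ) [IsProbabilityMeasure ν₁] [IsProbabilityMeasure ν₂] (t : ℝ) :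
    charFn (ν₁.conv ν₂) t = charFn ν₁ t * charFn ν₂ t := by
  rw [charFn, Measure.conv,
    integral_map (by fun_prop) (Continuous.aestronglyMeasurable (by continuity))]
  have : ∀ p : ℝ × ℝ, Complex.exp (t * ↑(p.1 + p.2) * Complex.I)
      = Complex.exp (t * p.1 * Complex.I) * Complex.exp (t * p.2 * Complex.I) := by
    intro p
    rw [← Complex.exp_add]; congr 1; push_cast; ring
  simp_rw [this]
  rw [MeasureTheory.integral_prod_mul (f := fun x : ℝ => Complex.exp (t * x * Complex.I))
    (g := fun x : ℝ => Complex.exp (t * x * Complex.I))]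
  rfl

lemma charFn_neg (ρ : Measure ℝ) [IsProbabilityMeasure ρ] (t : ℝ) :
    charFn (Measure.map (fun x : ℝ => -x) ρ) t = (starRingEnd ℂ) (charFn ρ t) := by
  rw [charFn, integral_map (by fun_prop) (Continuous.aestronglyMeasurable (by continuity)),
    charFn, ← integral_conj]
  congr 1; ext x
  rw [← Complex.exp_conj]
  congr 1
  simp only [map_mul, Complex.conj_I, Complex.conj_ofReal]
  push_cast; ring

instance convPow_prob (ρ : Measure ℝ) [IsProbabilityMeasure ρ] (n : ℕ) :
    IsProbabilityMeasure (convPow ρ n) := by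
  induction n with
  | zero => exact (by infer_instance : IsProbabilityMeasure (Measure.dirac (0:ℝ)))
  | succ n ih => exact Measure.probabilitymeasure_of_probabilitymeasures_conv _ _

lemma charFn_convPow (ρ : Measure ℝ) [IsProbabilityMeasure ρ] (n : ℕ) (t : ℝ) :
    charFn (convPow ρ n) t = charFn ρ t ^ n := by
  induction n with
  | zero => simp [convPow, charFn]
  | succ n ih => rw [convPow, charFn_conv, ih, pow_succ]


lemma integrable_cos (μ : Measure ℝ) [IsFiniteMeasure μ] (t : ℝ) :
    Integrable (fun x : ℝ => Real.cos (t * x)) μ := by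
  refine (integrable_const (1 : ℝ)).mono' ?_ ?_
  · exact (Continuous.aestronglyMeasurable (by continuity))
  · filter_upwards with x
    simpa using Real.abs_cos_le_one (t*x)

lemma charFn_re (μ : Measure ℝ) [IsFiniteMeasure μ] (t : ℝ) :
    (charFn μ t).re = ∫ x : ℝ, Real.cos (t * x) ∂μ := by
  rw [charFn, ← RCLike.re_to_complex, ← integral_re (integrable_exp μ t)]
  simp only [RCLike.re_to_complex]
  congr 1; ext x
  have : (t : ℂ) * x * Complex.I = ((t * x : ℝ) : ℂ) * Complex.I := by push_cast; ring
  rw [this, Complex.exp_ofReal_mul_I_re]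


lemma integrable_one_sub_cos (μ : Measure ℝ) [IsFiniteMeasure μ] (t : ℝ) :
    Integrable (fun x : ℝ => 1 - Real.cos (t * x)) μ :=
  (integrable_const 1).sub (integrable_cos μ t)

lemma one_sub_charFn_re (μ : Measure ℝ) [IsProbabilityMeasure μ] (t : ℝ) :
    1 - (charFn μ t).re = ∫ x : ℝ, (1 - Real.cos (t * x)) ∂μ := by
  rw [charFn_re, integral_sub (integrable_const 1) (integrable_cos μ t)]
  simp


lemma cos_eq1 (t h x : ℝ) : Real.cos ((t+h)*x) = Real.cos (t*x) * Real.cos (h*x) - Real.sin (t*x) * Real.sin (h*x) := by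
  rw [show (t+h)*x = t*x + h*x by ring, Real.cos_add]

lemma cos_eq2 (t h x : ℝ) : Real.cos ((t-h)*x) = Real.cos (t*x) * Real.cos (h*x) + Real.sin (t*x) * Real.sin (h*x) := by
  rw [show (t-h)*x = t*x - h*x by ring, Real.cos_sub]

-- (a)
lemma ineq_a (μ : Measure ℝ) [IsProbabilityMeasure μ] (t : ℝ) :
    1 - (charFn μ (2*t)).re ≤ 4 * (1 - (charFn μ t).re) := by
  have e1 : (∫ x : ℝ, (1 - Real.cos (2*t*x)) ∂μ) = 1 - (charFn μ (2*t)).re :=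
    (one_sub_charFn_re μ (2*t)).symm
  have e2 : (∫ x : ℝ, (4 * (1 - Real.cos (t*x))) ∂μ) = 4 * (1 - (charFn μ t).re) := by
    rw [integral_const_mul, ← one_sub_charFn_re]
  rw [← e1, ← e2]
  refine integral_mono (integrable_one_sub_cos μ (2*t)) ((integrable_one_sub_cos μ t).const_mul 4)
    fun x => ?_
  dsimp only
  have h2 : Real.cos (2*t*x) = 2 * Real.cos (t*x)^2 - 1 := by
    rw [show 2*t*x = 2*(t*x) by ring, Real.cos_two_mul]
  rw [h2]
  nlinarith [sq_nonneg (1 - Real.cos (t*x))]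

-- (b)
lemma ineq_b (μ : Measure ℝ) [IsProbabilityMeasure μ] (t h : ℝ) :
    (1 - (charFn μ (t+h)).re) + (1 - (charFn μ (t-h)).re)
      ≤ 2 * (1 - (charFn μ t).re) + 2 * (1 - (charFn μ h).re) := by
  have e1 : (∫ x : ℝ, ((1 - Real.cos ((t+h)*x)) + (1 - Real.cos ((t-h)*x))) ∂μ)
      = (1 - (charFn μ (t+h)).re) + (1 - (charFn μ (t-h)).re) := by
    rw [integral_add (integrable_one_sub_cos μ (t+h)) (integrable_one_sub_cos μ (t-h)),
      ← one_sub_charFn_re, ← one_sub_charFn_re]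
  have e2 : (∫ x : ℝ, (2 * (1 - Real.cos (t*x)) + 2 * (1 - Real.cos (h*x))) ∂μ)
      = 2 * (1 - (charFn μ t).re) + 2 * (1 - (charFn μ h).re) := by
    rw [integral_add ((integrable_one_sub_cos μ t).const_mul 2) ((integrable_one_sub_cos μ h).const_mul 2),
      integral_const_mul, integral_const_mul, ← one_sub_charFn_re, ← one_sub_charFn_re]
  rw [← e1, ← e2]
  refine integral_mono ((integrable_one_sub_cos μ (t+h)).add (integrable_one_sub_cos μ (t-h)))
    (((integrable_one_sub_cos μ t).const_mul 2).add ((integrable_one_sub_cos μ h).const_mul 2))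
    fun x => ?_
  dsimp only
  rw [cos_eq1, cos_eq2]
  nlinarith [mul_nonneg (sub_nonneg.2 (Real.cos_le_one (t*x))) (sub_nonneg.2 (Real.cos_le_one (h*x)))]

-- (c)
lemma ineq_c (μ : Measure ℝ) [IsProbabilityMeasure μ] (t h : ℝ) :
    2 * (1 - (charFn μ t).re)
      ≤ (1 - (charFn μ (t+h)).re) + (1 - (charFn μ (t-h)).re) + 2 * (1 - (charFn μ h).re) := by
  have e1 : (∫ x : ℝ, (2 * (1 - Real.cos (t*x))) ∂μ) = 2 * (1 - (charFn μ t).re) := by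
    rw [integral_const_mul, ← one_sub_charFn_re]
  have e2 : (∫ x : ℝ, ((1 - Real.cos ((t+h)*x)) + (1 - Real.cos ((t-h)*x)) + 2 * (1 - Real.cos (h*x))) ∂μ)
      = (1 - (charFn μ (t+h)).re) + (1 - (charFn μ (t-h)).re) + 2 * (1 - (charFn μ h).re) := by
    have iTH : Integrable (fun x : ℝ => (1 - Real.cos ((t+h)*x)) + (1 - Real.cos ((t-h)*x))) μ :=
      (integrable_one_sub_cos μ (t+h)).add (integrable_one_sub_cos μ (t-h))
    rw [integral_add iTH ((integrable_one_sub_cos μ h).const_mul 2),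
      integral_add (integrable_one_sub_cos μ (t+h)) (integrable_one_sub_cos μ (t-h)),
      integral_const_mul, ← one_sub_charFn_re, ← one_sub_charFn_re, ← one_sub_charFn_re]
  rw [← e1, ← e2]
  refine integral_mono ((integrable_one_sub_cos μ t).const_mul 2)
    (((integrable_one_sub_cos μ (t+h)).add (integrable_one_sub_cos μ (t-h))).add
      ((integrable_one_sub_cos μ h).const_mul 2)) fun x => ?_
  dsimp only
  rw [cos_eq1, cos_eq2]
  nlinarith [mul_nonneg (sub_nonneg.2 (Real.cos_le_one (h*x)))
    (by nlinarith [Real.neg_one_le_cos (t*x)] : (0:ℝ) ≤ 1 + Real.cos (t*x))]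


-- rpow limit lemmas, standalone
lemma tendsto_rpow_inv_one {x : ℝ} (hx : 0 < x) :
    Tendsto (fun n : ℕ => x ^ ((n:ℝ)⁻¹)) atTop (𝓝 1) := by
  have h0 : Tendsto (fun n : ℕ => ((n:ℝ))⁻¹) atTop (𝓝 0) :=
    tendsto_inv_atTop_zero.comp tendsto_natCast_atTop_atTop
  have h1 : Tendsto (fun n : ℕ => Real.exp (Real.log x * ((n:ℝ))⁻¹)) atTop (𝓝 1) := by
    have h2 : Tendsto (fun n : ℕ => Real.log x * ((n:ℝ))⁻¹) atTop (𝓝 0) := by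
      simpa using h0.const_mul (Real.log x)
    have := (Real.continuous_exp.tendsto 0).comp h2
    simpa [Function.comp_def] using this
  refine h1.congr fun n => ?_
  rw [Real.rpow_def_of_pos hx]

lemma tendsto_n_mul_one_sub_rpow {x : ℝ} (hx : 0 < x) :
    Tendsto (fun n : ℕ => (n : ℝ) * (1 - x ^ ((n:ℝ)⁻¹))) atTop (𝓝 (-Real.log x)) := by
  set L := Real.log x with hL
  have hd : HasDerivAt (fun y : ℝ => Real.exp (L * y)) L 0 := by
    have h1 : HasDerivAt (fun y : ℝ => L * y) L 0 := by
      simpa using (hasDerivAt_id (0:ℝ)).const_mul L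
    simpa [Function.comp_def] using (Real.hasDerivAt_exp (L * 0)).comp 0 h1
  have hslope : Tendsto (slope (fun y : ℝ => Real.exp (L * y)) 0) (𝓝[≠] 0) (𝓝 L) :=
    hasDerivAt_iff_tendsto_slope.mp hd
  have hu : Tendsto (fun n : ℕ => ((n:ℝ))⁻¹) atTop (𝓝[≠] (0:ℝ)) := by
    refine tendsto_nhdsWithin_of_tendsto_nhds_of_eventually_within _
      (tendsto_inv_atTop_zero.comp tendsto_natCast_atTop_atTop) ?_
    filter_upwards [eventually_ge_atTop 1] with n hn
    have : ((n:ℝ)) ≠ 0 := by positivity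
    simp [this]
  have hcomp : Tendsto (fun n : ℕ => -(slope (fun y : ℝ => Real.exp (L * y)) 0 ((n:ℝ)⁻¹)))
      atTop (𝓝 (-L)) := (hslope.comp hu).neg
  refine hcomp.congr' ?_
  filter_upwards [eventually_ge_atTop 1] with n hn
  have hn0 : ((n:ℝ)) ≠ 0 := by positivity
  rw [slope_def_field]
  rw [Real.rpow_def_of_pos hx, ← hL]
  field_simp
  rw [mul_zero, Real.exp_zero]; ring

noncomputable def Fa (ν : Measure ℝ) (t : ℝ) : ℝ := ‖charFn ν t‖ ^ 2

lemma Fa_nonneg (ν : Measure ℝ) (t : ℝ) : 0 ≤ Fa ν t := by unfold Fa; positivity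

lemma Fa_zero (ν : Measure ℝ) [IsProbabilityMeasure ν] : Fa ν 0 = 1 := by
  simp [Fa, charFn_zero]

lemma continuous_Fa (ν : Measure ℝ) [IsFiniteMeasure ν] : Continuous (Fa ν) :=
  (continuous_norm.comp (continuous_charFn ν)).pow 2

lemma id_exists (ν : Measure ℝ) (hν : IsInfinitelyDivisible ν) (n : ℕ) (hn : 0 < n) :
    ∃ m : Measure ℝ, IsProbabilityMeasure m ∧
      ∀ t : ℝ, (charFn m t).re = (Fa ν t) ^ ((n:ℝ)⁻¹) := by
  haveI := hν.1
  obtain ⟨ρ, hρ, hνeq⟩ := hν.2 n hn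
  haveI := hρ
  haveI : IsProbabilityMeasure (Measure.map (fun x : ℝ => -x) ρ) :=
    Measure.isProbabilityMeasure_map measurable_neg.aemeasurable
  refine ⟨ρ.conv (Measure.map (fun x : ℝ => -x) ρ), inferInstance, fun t => ?_⟩
  rw [charFn_conv, charFn_neg, Complex.mul_conj]
  have h1 : (Fa ν t) = (‖charFn ρ t‖ ^ 2) ^ n := by
    rw [Fa, hνeq, charFn_convPow, norm_pow, ← pow_mul, ← pow_mul, mul_comm]
  rw [h1, Real.pow_rpow_inv_natCast (by positivity) hn.ne']
  rw [Complex.ofReal_re, ← Complex.sq_norm]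

lemma Fa_double (ν : Measure ℝ) (hν : IsInfinitelyDivisible ν) (s : ℝ)
    (hp : 0 < Fa ν s) : 0 < Fa ν (2*s) := by
  have h1 := tendsto_rpow_inv_one hp
  obtain ⟨n, hmem⟩ := ((h1.eventually (eventually_gt_nhds (by norm_num : (3/4:ℝ) < 1))).and
    (eventually_ge_atTop 1)).exists
  obtain ⟨hgt, hn1⟩ := hmem
  obtain ⟨m, hm, hre⟩ := id_exists ν hν n (by omega)
  haveI := hm
  have ha := ineq_a m s
  rw [hre, hre] at ha
  have h2s : 0 < (Fa ν (2*s)) ^ ((n:ℝ)⁻¹) := by linarith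
  by_contra hcon
  push_neg at hcon
  have h0 : Fa ν (2*s) = 0 := le_antisymm hcon (Fa_nonneg ν (2*s))
  rw [h0, Real.zero_rpow (by simpa using (by exact_mod_cast (by omega : n ≠ 0) : ((n:ℝ)) ≠ 0))] at h2s
  exact lt_irrefl 0 h2s

lemma Fa_pos (ν : Measure ℝ) (hν : IsInfinitelyDivisible ν) (t : ℝ) : 0 < Fa ν t := by
  haveI := hν.1
  have hcont : Tendsto (Fa ν) (𝓝 0) (𝓝 1) := by
    have := (continuous_Fa ν).tendsto 0
    rwa [Fa_zero] at this
  have hev : ∀ᶠ s in 𝓝 (0:ℝ), 0 < Fa ν s := hcont.eventually (eventually_gt_nhds one_pos)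
  obtain ⟨δ, hδpos, hδ⟩ := Metric.eventually_nhds_iff.mp hev
  obtain ⟨k, hk⟩ : ∃ k : ℕ, |t| / δ < 2 ^ k := pow_unbounded_of_one_lt _ one_lt_two
  have hbase : 0 < Fa ν (t / 2^k) := by
    apply hδ
    rw [Real.dist_eq, sub_zero, abs_div, abs_of_pos (by positivity : (0:ℝ) < (2:ℝ)^k),
      div_lt_iff₀ (by positivity)]
    calc |t| = (|t|/δ) * δ := by field_simp
    _ < 2^k * δ := by exact mul_lt_mul_of_pos_right hk hδpos
    _ = δ * 2^k := by ring
  have hstep : ∀ j : ℕ, 0 < Fa ν (2^j * (t / 2^k)) := by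
    intro j
    induction j with
    | zero => rw [pow_zero, one_mul]; exact hbase
    | succ j ih =>
        have := Fa_double ν hν _ ih
        rwa [show 2 * (2^j * (t / 2^k)) = 2^(j+1) * (t / 2^k) by ring] at this
  have := hstep k
  rwa [show (2:ℝ)^k * (t / 2^k) = t by field_simp] at this

lemma log_Fa_ineq (ν : Measure ℝ) (hν : IsInfinitelyDivisible ν) (t h : ℝ) :
    2 * Real.log (Fa ν t) + 2 * Real.log (Fa ν h)
        ≤ Real.log (Fa ν (t+h)) + Real.log (Fa ν (t-h)) ∧
    Real.log (Fa ν (t+h)) + Real.log (Fa ν (t-h)) + 2 * Real.log (Fa ν h)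
        ≤ 2 * Real.log (Fa ν t) := by
  have hp : ∀ s, 0 < Fa ν s := Fa_pos ν hν
  set a : ℝ → ℕ → ℝ := fun s n => (n:ℝ) * (1 - (Fa ν s) ^ ((n:ℝ)⁻¹)) with ha
  have hlim : ∀ s, Tendsto (a s) atTop (𝓝 (-Real.log (Fa ν s))) :=
    fun s => tendsto_n_mul_one_sub_rpow (hp s)
  have hstep : ∀ᶠ n in atTop,
      (a (t+h) n + a (t-h) n ≤ 2 * a t n + 2 * a h n) ∧
      (2 * a t n ≤ a (t+h) n + a (t-h) n + 2 * a h n) := by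
    filter_upwards [eventually_ge_atTop 1] with n hn
    obtain ⟨m, hm, hre⟩ := id_exists ν hν n (by omega)
    haveI := hm
    have hb := ineq_b m t h
    have hc := ineq_c m t h
    rw [hre, hre, hre, hre] at hb hc
    have hn0 : (0:ℝ) ≤ (n:ℝ) := by positivity
    constructor
    · have := mul_le_mul_of_nonneg_left hb hn0
      simp only [ha]
      nlinarith
    · have := mul_le_mul_of_nonneg_left hc hn0
      simp only [ha]
      nlinarith
  constructor
  · have := le_of_tendsto_of_tendsto ((hlim (t+h)).add (hlim (t-h)))
      (((hlim t).const_mul 2).add ((hlim h).const_mul 2))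
      (hstep.mono fun n hn => hn.1)
    linarith
  · have := le_of_tendsto_of_tendsto ((hlim t).const_mul 2)
      (((hlim (t+h)).add (hlim (t-h))).add ((hlim h).const_mul 2))
      (hstep.mono fun n hn => hn.2)
    linarith

lemma Fa_ineq (ν : Measure ℝ) (hν : IsInfinitelyDivisible ν) (t h : ℝ) :
    Fa ν t ^ 2 * Fa ν h ^ 2 ≤ Fa ν (t+h) * Fa ν (t-h) ∧
    Fa ν (t+h) * Fa ν (t-h) * Fa ν h ^ 2 ≤ Fa ν t ^ 2 := by
  have hp : ∀ s, 0 < Fa ν s := Fa_pos ν hν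
  obtain ⟨h1, h2⟩ := log_Fa_ineq ν hν t h
  have key : ∀ s : ℝ, Real.exp (2 * Real.log (Fa ν s)) = Fa ν s ^ 2 := fun s => by
    rw [two_mul, Real.exp_add, Real.exp_log (hp s), sq]
  constructor
  · have := Real.exp_le_exp.2 h1
    rwa [Real.exp_add, Real.exp_add, key, key, Real.exp_log (hp (t+h)),
      Real.exp_log (hp (t-h))] at this
  · have := Real.exp_le_exp.2 h2
    rwa [Real.exp_add, Real.exp_add, key, key, Real.exp_log (hp (t+h)),
      Real.exp_log (hp (t-h))] at this

/-- For a rational-infinitely divisible probability measure `μ` on `ℝ` with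
characteristic function `f`, for every `τ > 0` the averages
`(1/(2τ)) ∫_{−τ}^{τ} |f(t−h)f(t+h)|/|f(t)|² dh` are bounded uniformly in `t`. -/
theorem rid_charFn_quotient_mean_bounded
    (μ : Measure ℝ) [IsProbabilityMeasure μ]
    (hRID : IsRationalInfinitelyDivisible μ) :
    ∀ τ : ℝ, 0 < τ → ∃ M : ℝ, ∀ t : ℝ,
      (1 / (2 * τ)) * ∫ h in (-τ)..τ,
        ‖charFn μ (t - h) * charFn μ (t + h)‖ / ‖charFn μ t‖ ^ 2
      ≤ M := by
  obtain ⟨μ₁, μ₂, h₁, h₂, hconv⟩ := hRID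
  haveI i1 := h₁.1
  haveI i2 := h₂.1
  have hmul : ∀ s : ℝ, charFn μ₁ s = charFn μ s * charFn μ₂ s := fun s => by
    rw [hconv, charFn_conv]
  have hFmul : ∀ s : ℝ, Fa μ₁ s = Fa μ s * Fa μ₂ s := fun s => by
    rw [Fa, Fa, Fa, hmul, norm_mul]; ring
  have hp1 : ∀ s, 0 < Fa μ₁ s := Fa_pos μ₁ h₁
  have hp2 : ∀ s, 0 < Fa μ₂ s := Fa_pos μ₂ h₂
  have hFdiv : ∀ s : ℝ, Fa μ s = Fa μ₁ s / Fa μ₂ s := fun s => by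
    rw [hFmul s, mul_div_assoc, div_self (hp2 s).ne', mul_one]
  have hpμ : ∀ s, 0 < Fa μ s := fun s => by
    rw [hFdiv s]; exact div_pos (hp1 s) (hp2 s)
  intro τ hτ
  set G : ℝ → ℝ := fun h => 1 / (Fa μ₁ h * Fa μ₂ h) with hG
  refine ⟨(1 / (2*τ)) * ∫ h in (-τ)..τ, G h, fun t => ?_⟩
  have hbound : ∀ h : ℝ,
      ‖charFn μ (t - h) * charFn μ (t + h)‖ / ‖charFn μ t‖ ^ 2 ≤ G h := by
    intro h
    have hGpos : 0 < G h := by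
      show (0:ℝ) < 1 / (Fa μ₁ h * Fa μ₂ h)
      exact div_pos one_pos (mul_pos (hp1 h) (hp2 h))
    refine le_of_pow_le_pow_left₀ two_ne_zero hGpos.le ?_
    have hA2 : (‖charFn μ (t - h) * charFn μ (t + h)‖ / ‖charFn μ t‖ ^ 2) ^ 2
        = (Fa μ (t - h) * Fa μ (t + h)) / (Fa μ t) ^ 2 := by
      rw [Fa, Fa, Fa, norm_mul]
      ring
    have hG2 : G h ^ 2 = 1 / (Fa μ₁ h * Fa μ₂ h) ^ 2 := by
      rw [hG]; rw [div_pow]; norm_num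
    rw [hA2, hG2]
    have k1 := (Fa_ineq μ₁ h₁ t h).2
    have k2 := (Fa_ineq μ₂ h₂ t h).1
    have e1 : Fa μ (t - h) = Fa μ₁ (t - h) / Fa μ₂ (t - h) := hFdiv _
    have e2 : Fa μ (t + h) = Fa μ₁ (t + h) / Fa μ₂ (t + h) := hFdiv _
    have e3 : Fa μ t = Fa μ₁ t / Fa μ₂ t := hFdiv _
    rw [e1, e2, e3]
    have hEq : (Fa μ₁ (t - h) / Fa μ₂ (t - h)) * (Fa μ₁ (t + h) / Fa μ₂ (t + h))
        / (Fa μ₁ t / Fa μ₂ t) ^ 2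
        = (Fa μ₁ (t - h) * Fa μ₁ (t + h) * Fa μ₂ t ^ 2)
          / (Fa μ₂ (t - h) * Fa μ₂ (t + h) * Fa μ₁ t ^ 2) := by
      field_simp
      try ring
    rw [hEq, div_le_div_iff₀ (mul_pos (mul_pos (hp2 (t-h)) (hp2 (t+h))) (pow_pos (hp1 t) 2))
      (pow_pos (mul_pos (hp1 h) (hp2 h)) 2)]
    have hprod := mul_le_mul k1 k2 (by positivity) (by positivity)
    nlinarith [hprod, sq_nonneg (Fa μ₁ h * Fa μ₂ h), (hp1 (t+h)).le, (hp2 (t+h)).le,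
      (hp1 (t-h)).le, (hp2 (t-h)).le, (hp1 t).le, (hp2 t).le, (hp1 h).le, (hp2 h).le]
  have hcμ : Continuous (charFn μ) := continuous_charFn μ
  have hcont1 : Continuous (fun h : ℝ =>
      ‖charFn μ (t - h) * charFn μ (t + h)‖ / ‖charFn μ t‖ ^ 2) := by
    apply Continuous.div_const
    exact continuous_norm.comp
      ((hcμ.comp (continuous_const.sub continuous_id)).mul
        (hcμ.comp (continuous_const.add continuous_id)))
  have hcont2 : Continuous G := by
    rw [hG]
    exact Continuous.div continuous_const
      ((continuous_Fa μ₁).mul (continuous_Fa μ₂))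
      (fun x => (mul_pos (hp1 x) (hp2 x)).ne')
  have hImono : (∫ h in (-τ)..τ,
      ‖charFn μ (t - h) * charFn μ (t + h)‖ / ‖charFn μ t‖ ^ 2)
      ≤ ∫ h in (-τ)..τ, G h := by
    apply intervalIntegral.integral_mono_on (by linarith)
      (hcont1.intervalIntegrable _ _) (hcont2.intervalIntegrable _ _)
    intro h _
    exact hbound h
  have h2τ : 0 ≤ 1 / (2*τ) := by positivity
  exact mul_le_mul_of_nonneg_left hImono h2τ
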